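/- Under the same hypotheses (D bounded, G nonnegative, R uniformly positive, all bounded self-adjoint where appropriate), the kernel of the adjoint A* of A = [[-G, -D*], [D, -R]] equals the kernel of A, and both equal (ker G ∩ ker D) × {0}. -/

import Mathlib

/-
For `z = (x₁, x₂)` the cross terms `-⟪D† x₂, x₁⟫ + ⟪D x₁, x₂⟫` have zero real part, so
`re ⟪A z, z⟫ = -re ⟪G x₁, x₁⟫ - re ⟪R x₂, x₂⟫ ≤ -r₀ ‖x₂‖²`. Hence `A` is dissipative, and
`A z = 0` forces `x₂ = 0`, after which `A z = (-G x₁, D x₁)`. For any dissipative `T`,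
`ker T† = ker T`: if `T z = 0` then `t ↦ re ⟪T (z + t w), z + t w⟫ ≤ 0` is a quadratic without
constant term, so its linear coefficient `re ⟪T w, z⟫` vanishes; taking `w = T† z` gives
`‖T† z‖² = 0`. Since `T†` is dissipative as well, the reverse inclusion follows by symmetry.
-/

open ContinuousLinearMap RCLike

local notation "⟪" x ", " y "⟫" => @inner ℂ _ _ x y

section Dissipative

variable {𝕜 E : Type*} [RCLike 𝕜] [NormedAddCommGroup E] [InnerProductSpace 𝕜 E]

theorem re_inner_map_eq_zero_of_map_eq_zero {T : E →ₗ[𝕜] E}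
    (hT : ∀ x, re (inner 𝕜 (T x) x) ≤ 0) {z : E} (hz : T z = 0) (w : E) :
    re (inner 𝕜 (T w) z) = 0 := by
  have hquad : ∀ t : ℝ,
      0 ≤ -re (inner 𝕜 (T w) w) * (t * t) + -re (inner 𝕜 (T w) z) * t + 0 := by
    intro t
    have h := hT (z + (t : 𝕜) • w)
    simp only [map_add, map_smul, hz, zero_add, inner_smul_left, inner_add_right,
      inner_smul_right, conj_ofReal, re_ofReal_mul] at h
    linarith
  have h := discrim_le_zero hquad
  rw [discrim] at h
  nlinarith [sq_nonneg (re (inner 𝕜 (T w) z))]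

variable [CompleteSpace E]

theorem adjoint_apply_eq_zero_of_apply_eq_zero {T : E →L[𝕜] E}
    (hT : ∀ x, re (inner 𝕜 (T x) x) ≤ 0) {z : E} (hz : T z = 0) : adjoint T z = 0 := by
  have h := re_inner_map_eq_zero_of_map_eq_zero (T := T.toLinearMap) hT hz (adjoint T z)
  rw [coe_coe, ← adjoint_inner_right] at h
  exact re_inner_self_nonpos.mp h.le

theorem re_inner_adjoint_apply_self (T : E →L[𝕜] E) (x : E) :
    re (inner 𝕜 (adjoint T x) x) = re (inner 𝕜 (T x) x) := by
  rw [adjoint_inner_left, inner_re_symm]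

theorem ker_adjoint_eq_ker {T : E →L[𝕜] E} (hT : ∀ x, re (inner 𝕜 (T x) x) ≤ 0) :
    LinearMap.ker (adjoint T : E →ₗ[𝕜] E) = LinearMap.ker (T : E →ₗ[𝕜] E) := by
  have hT' : ∀ x, re (inner 𝕜 (adjoint T x) x) ≤ 0 := fun x =>
    (re_inner_adjoint_apply_self T x).trans_le (hT x)
  ext z
  simp only [LinearMap.mem_ker, coe_coe]
  refine ⟨fun hz => ?_, adjoint_apply_eq_zero_of_apply_eq_zero hT⟩
  simpa using adjoint_apply_eq_zero_of_apply_eq_zero hT' hz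

end Dissipative

section BlockOperator

variable {𝕜 E F : Type*} [RCLike 𝕜] [NormedAddCommGroup E] [InnerProductSpace 𝕜 E]
  [CompleteSpace E] [NormedAddCommGroup F] [InnerProductSpace 𝕜 F] [CompleteSpace F]
  {D : E →L[𝕜] F} {G : E →L[𝕜] E} {R : F →L[𝕜] F}
  {A : WithLp 2 (E × F) →L[𝕜] WithLp 2 (E × F)}

theorem re_inner_block_apply_self
    (hA : ∀ x₁ x₂, A (WithLp.toLp 2 (x₁, x₂)) = WithLp.toLp 2 (-(G x₁) - adjoint D x₂, D x₁ - R x₂))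
    (x₁ : E) (x₂ : F) :
    re (inner 𝕜 (A (WithLp.toLp 2 (x₁, x₂))) (WithLp.toLp 2 (x₁, x₂))) =
      -re (inner 𝕜 (G x₁) x₁) - re (inner 𝕜 (R x₂) x₂) := by
  rw [hA, WithLp.prod_inner_apply]
  simp only [inner_sub_left, inner_neg_left, adjoint_inner_left, map_add, map_sub, map_neg]
  rw [inner_re_symm x₂]
  ring

theorem block_apply_eq_zero_iff
    (hA : ∀ x₁ x₂, A (WithLp.toLp 2 (x₁, x₂)) = WithLp.toLp 2 (-(G x₁) - adjoint D x₂, D x₁ - R x₂))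
    (hG : ∀ x, 0 ≤ re (inner 𝕜 (G x) x)) {r₀ : ℝ} (hr₀ : 0 < r₀)
    (hR : ∀ x, r₀ * ‖x‖ ^ 2 ≤ re (inner 𝕜 (R x) x)) (x₁ : E) (x₂ : F) :
    A (WithLp.toLp 2 (x₁, x₂)) = 0 ↔ G x₁ = 0 ∧ D x₁ = 0 ∧ x₂ = 0 := by
  constructor
  · intro hx
    have hre := re_inner_block_apply_self hA x₁ x₂
    rw [hx, inner_zero_left, map_zero] at hre
    have hx₂ : x₂ = 0 := by
      have hr : r₀ * ‖x₂‖ ^ 2 ≤ 0 := by linarith [hG x₁, hR x₂]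
      simpa using nonpos_of_mul_nonpos_right hr hr₀
    subst hx₂
    rw [hA, map_zero, map_zero, sub_zero, sub_zero] at hx
    simpa using hx
  · rintro ⟨hG₀, hD₀, rfl⟩
    rw [hA, hG₀, hD₀]
    simp

theorem re_inner_block_apply_self_nonpos
    (hA : ∀ x₁ x₂, A (WithLp.toLp 2 (x₁, x₂)) = WithLp.toLp 2 (-(G x₁) - adjoint D x₂, D x₁ - R x₂))
    (hG : ∀ x, 0 ≤ re (inner 𝕜 (G x) x)) (hR : ∀ x, 0 ≤ re (inner 𝕜 (R x) x))
    (z : WithLp 2 (E × F)) : re (inner 𝕜 (A z) z) ≤ 0 := by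
  obtain ⟨x₁, x₂⟩ := z
  linarith [re_inner_block_apply_self hA x₁ x₂, hG x₁, hR x₂]

end BlockOperator

theorem stmt5_general {X : Type*} [NormedAddCommGroup X] [InnerProductSpace ℂ X] [CompleteSpace X]
    (D G R : X →L[ℂ] X)
    (hGpos : ∀ x : X, 0 ≤ (⟪G x, x⟫).re)
    (r₀ : ℝ) (hr₀ : 0 < r₀)
    (hRpos : ∀ x : X, r₀ * ‖x‖ ^ 2 ≤ (⟪R x, x⟫).re)
    (A : WithLp 2 (X × X) →L[ℂ] WithLp 2 (X × X))
    (hA : ∀ x₁ x₂ : X, A ((WithLp.equiv 2 (X × X)).symm (x₁, x₂)) =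
      (WithLp.equiv 2 (X × X)).symm
        (-(G x₁) - (ContinuousLinearMap.adjoint D) x₂, D x₁ - R x₂)) :
    LinearMap.ker
        (ContinuousLinearMap.adjoint A : WithLp 2 (X × X) →ₗ[ℂ] WithLp 2 (X × X)) =
      LinearMap.ker (A : WithLp 2 (X × X) →ₗ[ℂ] WithLp 2 (X × X)) ∧
    ∀ z : WithLp 2 (X × X), z ∈ LinearMap.ker (A : WithLp 2 (X × X) →ₗ[ℂ] WithLp 2 (X × X)) ↔
      (G (WithLp.equiv 2 (X × X) z).1 = 0 ∧ D (WithLp.equiv 2 (X × X) z).1 = 0 ∧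
        (WithLp.equiv 2 (X × X) z).2 = 0) := by
  have hRnonneg : ∀ x : X, 0 ≤ (⟪R x, x⟫).re := fun x =>
    (mul_nonneg hr₀.le (sq_nonneg ‖x‖)).trans (hRpos x)
  refine ⟨ker_adjoint_eq_ker (re_inner_block_apply_self_nonpos hA hGpos hRnonneg), fun z => ?_⟩
  obtain ⟨x₁, x₂⟩ := z
  simpa using block_apply_eq_zero_iff hA hGpos hr₀ hRpos x₁ x₂

/-- `ker A* = ker A = (ker G ∩ ker D) × {0}` for `A = [[-G,-D*],[D,-R]]` with `G ≥ 0`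
and `R` uniformly positive. The Hilbert space `X × X` is modeled as `WithLp 2 (X × X)`. -/
theorem stmt5 {X : Type*} [NormedAddCommGroup X] [InnerProductSpace ℂ X] [CompleteSpace X]
    (D G R : X →L[ℂ] X) (hG : IsSelfAdjoint G) (hR : IsSelfAdjoint R)
    (hGpos : ∀ x : X, 0 ≤ (⟪G x, x⟫).re)
    (r₀ : ℝ) (hr₀ : 0 < r₀)
    (hRpos : ∀ x : X, r₀ * ‖x‖ ^ 2 ≤ (⟪R x, x⟫).re)
    (A : WithLp 2 (X × X) →L[ℂ] WithLp 2 (X × X))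
    (hA : ∀ x₁ x₂ : X, A ((WithLp.equiv 2 (X × X)).symm (x₁, x₂)) =
      (WithLp.equiv 2 (X × X)).symm
        (-(G x₁) - (ContinuousLinearMap.adjoint D) x₂, D x₁ - R x₂)) :
    LinearMap.ker
        (ContinuousLinearMap.adjoint A : WithLp 2 (X × X) →ₗ[ℂ] WithLp 2 (X × X)) =
      LinearMap.ker (A : WithLp 2 (X × X) →ₗ[ℂ] WithLp 2 (X × X)) ∧
    ∀ z : WithLp 2 (X × X), z ∈ LinearMap.ker (A : WithLp 2 (X × X) →ₗ[ℂ] WithLp 2 (X × X)) ↔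
      (G (WithLp.equiv 2 (X × X) z).1 = 0 ∧ D (WithLp.equiv 2 (X × X) z).1 = 0 ∧
        (WithLp.equiv 2 (X × X) z).2 = 0) :=
  stmt5_general D G R hGpos r₀ hr₀ hRpos A hA
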